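/- For every μ > 0, γ ∈ ℝ, λ ∈ ℝ and n ∈ ℕ, the Specialized Chihara polynomials satisfy the three-term recurrence λ·P_n(λ;μ,γ) = √([n+1]_μ)·P_{n+1}(λ;μ,γ) + γ(−1)^n·P_n(λ;μ,γ) + √([n]_μ)·P_{n−1}(λ;μ,γ), where P_{−1}(λ;μ,γ) := 0. -/

import Mathlib

noncomputable section

open Real MeasureTheory

namespace MinusOne

/-- The μ-number `[n]_μ = n + (1 - (-1)^n) μ`. -/
def munum (μ : ℝ) (n : ℕ) : ℝ := n + (1 - (-1 : ℝ) ^ n) * μ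

/-- The μ-factorial `[n]_μ! = [1]_μ [2]_μ ⋯ [n]_μ`. -/
def mufact (μ : ℝ) (n : ℕ) : ℝ := ∏ k ∈ Finset.range n, munum μ (k + 1)

/-- Pochhammer symbol `(a)_k = a (a+1) ⋯ (a+k-1)`. -/
def poch (a : ℝ) (k : ℕ) : ℝ := ∏ i ∈ Finset.range k, (a + i)

/-- Laguerre polynomial `L_n^{(α)}(x)`. -/
def laguerre (α : ℝ) (n : ℕ) (x : ℝ) : ℝ :=
  (poch (α + 1) n / (Nat.factorial n : ℝ)) *
    ∑ k ∈ Finset.range (n + 1),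
      poch (-(n : ℝ)) k / (poch (α + 1) k * (Nat.factorial k : ℝ)) * x ^ k

/-- Specialized Chihara polynomials `P_n(x; μ, γ)`. -/
def P (μ γ : ℝ) (n : ℕ) (x : ℝ) : ℝ :=
  if n % 2 = 0 then
    (-1 : ℝ) ^ (n / 2) *
      Real.sqrt ((Nat.factorial (n / 2) : ℝ) * Real.Gamma (μ + 1/2) /
        Real.Gamma (((n / 2 : ℕ) : ℝ) + μ + 1/2)) *
      laguerre (μ - 1/2) (n / 2) ((x ^ 2 - γ ^ 2) / 2)
  else
    (-1 : ℝ) ^ (n / 2) *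
      Real.sqrt ((Nat.factorial (n / 2) : ℝ) * Real.Gamma (μ + 3/2) /
        Real.Gamma (((n / 2 : ℕ) : ℝ) + μ + 3/2)) *
      ((x - γ) / Real.sqrt (2 * μ + 1)) *
      laguerre (μ + 1/2) (n / 2) ((x ^ 2 - γ ^ 2) / 2)

/-- Chihara weight function `w(x; μ, γ)`. -/
def w (μ γ : ℝ) (x : ℝ) : ℝ :=
  Real.sign x * (x + γ) * ((x ^ 2 - γ ^ 2) / 2) ^ (μ - 1/2) *
    Real.exp (-((x ^ 2 - γ ^ 2) / 2))

/-- The set `F(γ) = (-∞, -|γ|) ∪ (|γ|, ∞)`. -/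
def Fset (γ : ℝ) : Set ℝ := Set.Iio (-|γ|) ∪ Set.Ioi (|γ|)

/-- Normalized Chihara weight `W = w / (2 Γ(μ+1/2))`. -/
def Wn (μ γ : ℝ) (x : ℝ) : ℝ := w μ γ x / (2 * Real.Gamma (μ + 1/2))

/-- The measure `W(x; μ, γ) dx` on `F(γ)`. -/
def meas1 (μ γ : ℝ) : Measure ℝ :=
  (volume.restrict (Fset γ)).withDensity fun x => ENNReal.ofReal (Wn μ γ x)

/-- The region `G = {|λ2| > |λ1| > |c|}`. -/
def Gset (c : ℝ) : Set (ℝ × ℝ) := {p : ℝ × ℝ | |c| < |p.1| ∧ |p.1| < |p.2|}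

/-- The measure `W(λ1; μ1, c ε1) W(λ2; μ2, λ1 ε2) dλ1 dλ2` on `G`. -/
def meas2 (μ1 μ2 c ε1 ε2 : ℝ) : Measure (ℝ × ℝ) :=
  ((volume : Measure (ℝ × ℝ)).restrict (Gset c)).withDensity
    fun p => ENNReal.ofReal (Wn μ1 (c * ε1) p.1 * Wn μ2 (p.1 * ε2) p.2)

/-- The region `G⁽³⁾ = {|λ3| > |λ2| > |λ1| > |c|}`. -/
def G3set (c : ℝ) : Set (ℝ × ℝ × ℝ) :=
  {p : ℝ × ℝ × ℝ | |c| < |p.1| ∧ |p.1| < |p.2.1| ∧ |p.2.1| < |p.2.2|}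

/-- The three-variable measure on `G⁽³⁾`. -/
def meas3 (μ1 μ2 μ3 c ε1 ε2 ε3 : ℝ) : Measure (ℝ × ℝ × ℝ) :=
  ((volume : Measure (ℝ × ℝ × ℝ)).restrict (G3set c)).withDensity
    fun p => ENNReal.ofReal
      (Wn μ1 (c * ε1) p.1 * Wn μ2 (p.1 * ε2) p.2.1 * Wn μ3 (p.2.1 * ε3) p.2.2)

/-- Big −1 Jacobi polynomials `J_n(x; a, b, c)`. -/
def J (a b c : ℝ) (n : ℕ) (x : ℝ) : ℝ :=
  if n % 2 = 0 then
    (∑ k ∈ Finset.range (n + 1),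
       poch (-(n : ℝ) / 2) k * poch (((n : ℝ) + a + b + 2) / 2) k /
         (poch ((a + 1) / 2) k * (Nat.factorial k : ℝ)) * ((1 - x ^ 2) / (1 - c ^ 2)) ^ k)
    + ((n : ℝ) * (1 - x) / ((1 + c) * (a + 1))) *
      ∑ k ∈ Finset.range (n + 1),
        poch (1 - (n : ℝ) / 2) k * poch (((n : ℝ) + a + b + 2) / 2) k /
          (poch ((a + 3) / 2) k * (Nat.factorial k : ℝ)) * ((1 - x ^ 2) / (1 - c ^ 2)) ^ k
  else
    (∑ k ∈ Finset.range (n + 1),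
       poch (-((n : ℝ) - 1) / 2) k * poch (((n : ℝ) + a + b + 1) / 2) k /
         (poch ((a + 1) / 2) k * (Nat.factorial k : ℝ)) * ((1 - x ^ 2) / (1 - c ^ 2)) ^ k)
    - (((n : ℝ) + a + b + 1) * (1 - x) / ((1 + c) * (a + 1))) *
      ∑ k ∈ Finset.range (n + 1),
        poch (-((n : ℝ) - 1) / 2) k * poch (((n : ℝ) + a + b + 3) / 2) k /
          (poch ((a + 3) / 2) k * (Nat.factorial k : ℝ)) * ((1 - x ^ 2) / (1 - c ^ 2)) ^ k

/-- Recurrence coefficient `A_n` for the Big −1 Jacobi polynomials. -/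
def JA (a b c : ℝ) (n : ℕ) : ℝ :=
  if n % 2 = 0 then ((n : ℝ) + a + 1) * (c + 1) / (2 * n + a + b + 2)
  else (1 - c) * ((n : ℝ) + a + b + 1) / (2 * n + a + b + 2)

/-- Recurrence coefficient `C_n` for the Big −1 Jacobi polynomials. -/
def JC (a b c : ℝ) (n : ℕ) : ℝ :=
  if n % 2 = 0 then (n : ℝ) * (1 - c) / (2 * n + a + b)
  else ((n : ℝ) + b) * (1 + c) / (2 * n + a + b)

/-- Big −1 Jacobi weight `ω(x; a, b, c)`. -/
def Jweight (a b c : ℝ) (x : ℝ) : ℝ :=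
  Real.sign x * (1 + x) * (x - c) * (x ^ 2 - c ^ 2) ^ ((b - 1) / 2) *
    (1 - x ^ 2) ^ ((a - 1) / 2)

/-- Big −1 Jacobi normalization `h_n(a, b)`. -/
def hJ (a b : ℝ) (n : ℕ) : ℝ :=
  if n % 2 = 0 then
    2 * Real.Gamma (((n : ℝ) + b + 1) / 2) * Real.Gamma (((n : ℝ) + a + 3) / 2) *
      (Nat.factorial (n / 2) : ℝ) /
      (((n : ℝ) + a + 1) * Real.Gamma (((n : ℝ) + a + b + 2) / 2) * (poch ((a + 1) / 2) (n / 2)) ^ 2)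
  else
    ((n : ℝ) + a + b + 1) * Real.Gamma (((n : ℝ) + b + 2) / 2) * Real.Gamma (((n : ℝ) + a + 2) / 2) *
      (Nat.factorial ((n - 1) / 2) : ℝ) /
      (2 * Real.Gamma (((n : ℝ) + a + b + 3) / 2) * (poch ((a + 1) / 2) ((n + 1) / 2)) ^ 2)

/-- Coupling factor `K_j(y; ν2, ν1; t, σ)`. -/
def K (ν2 ν1 t σ : ℝ) (j : ℕ) (y : ℝ) : ℝ :=
  Real.sqrt (((y ^ 2 - t ^ 2) / 2) ^ j * ((y - t * σ) / (y - (-1 : ℝ) ^ j * t * σ)) *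
    Real.Gamma (ν1 + 1/2) * Real.Gamma (ν2 + 1/2) /
    (Real.Gamma (ν1 + ν2 + j + 1) * hJ (2 * ν2) (2 * ν1) j))

/-- Dual −1 Hahn polynomials `R_n(x; η, ξ, N)`. -/
def Rdual (η ξ : ℝ) (N : ℕ) (n : ℕ) (x : ℝ) : ℝ :=
  if N % 2 = 0 then
    if n % 2 = 0 then
      (16 : ℝ) ^ (n / 2) * poch (-(N : ℝ) / 2) (n / 2) * poch ((1 - 2 * η - N) / 2) (n / 2) *
        ∑ k ∈ Finset.range (n / 2 + 1),
          poch (-((n : ℝ) / 2)) k * poch (-(η + ξ + N) / 2 + (x + 1) / 4) k *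
            poch (-(η + ξ + N) / 2 - (x + 1) / 4) k /
            (poch (-(N : ℝ) / 2) k * poch ((1 - 2 * η - N) / 2) k * (Nat.factorial k : ℝ))
    else
      (16 : ℝ) ^ (n / 2) * poch (1 - (N : ℝ) / 2) (n / 2) * poch ((1 - 2 * η - N) / 2) (n / 2) *
        (x + 2 * η + 2 * ξ + 1) *
        ∑ k ∈ Finset.range (n / 2 + 1),
          poch (-(((n : ℝ) - 1) / 2)) k * poch (-(η + ξ + N) / 2 + (x + 1) / 4) k *
            poch (-(η + ξ + N) / 2 - (x + 1) / 4) k /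
            (poch (1 - (N : ℝ) / 2) k * poch ((1 - 2 * η - N) / 2) k * (Nat.factorial k : ℝ))
  else
    if n % 2 = 0 then
      (16 : ℝ) ^ (n / 2) * poch ((1 - (N : ℝ)) / 2) (n / 2) * poch ((2 * ξ + 1) / 2) (n / 2) *
        ∑ k ∈ Finset.range (n / 2 + 1),
          poch (-((n : ℝ) / 2)) k * poch ((η + ξ + 1) / 2 + (x + 1) / 4) k *
            poch ((η + ξ + 1) / 2 - (x + 1) / 4) k /
            (poch ((1 - (N : ℝ)) / 2) k * poch ((2 * ξ + 1) / 2) k * (Nat.factorial k : ℝ))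
    else
      (16 : ℝ) ^ (n / 2) * poch ((1 - (N : ℝ)) / 2) (n / 2) * poch ((2 * ξ + 3) / 2) (n / 2) *
        (x + 2 * ξ - 2 * η + 1) *
        ∑ k ∈ Finset.range (n / 2 + 1),
          poch (-(((n : ℝ) - 1) / 2)) k * poch ((η + ξ + 1) / 2 + (x + 1) / 4) k *
            poch ((η + ξ + 1) / 2 - (x + 1) / 4) k /
            (poch ((1 - (N : ℝ)) / 2) k * poch ((2 * ξ + 3) / 2) k * (Nat.factorial k : ℝ))

/-- Grid points `y_s` for the dual −1 Hahn polynomials. -/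
def ygrid (η ξ : ℝ) (N : ℕ) (s : ℕ) : ℝ :=
  if N % 2 = 0 then (-1 : ℝ) ^ s * (2 * s - 2 * η - 2 * ξ - 2 * N - 1)
  else (-1 : ℝ) ^ s * (2 * s + 2 * η + 2 * ξ + 1)

/-- Weights `ϖ_s(η, ξ, N)` for the dual −1 Hahn polynomials. -/
def varpi (η ξ : ℝ) (N : ℕ) (s : ℕ) : ℝ :=
  if N % 2 = 0 then
    if s % 2 = 0 then
      (-1 : ℝ) ^ (s / 2) * poch (-(N : ℝ) / 2) (s / 2) * poch (-(N : ℝ) / 2 - η + 1/2) (s / 2) *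
        poch (-(N : ℝ) - η - ξ) (s / 2) /
        ((Nat.factorial (s / 2) : ℝ) * poch (-(N : ℝ) / 2 - ξ + 1/2) (s / 2) *
          poch (-(N : ℝ) / 2 - η - ξ) (s / 2))
    else
      (-1 : ℝ) ^ (s / 2) * poch (-(N : ℝ) / 2) (s / 2 + 1) * poch (-(N : ℝ) / 2 - η + 1/2) (s / 2) *
        poch (-(N : ℝ) - η - ξ) (s / 2) /
        ((Nat.factorial (s / 2) : ℝ) * poch (-(N : ℝ) / 2 - ξ + 1/2) (s / 2) *
          poch (-(N : ℝ) / 2 - η - ξ) (s / 2 + 1))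
  else
    if s % 2 = 0 then
      (-1 : ℝ) ^ (s / 2) * poch ((1 - (N : ℝ)) / 2) (s / 2) * poch (ξ + 1/2) (s / 2) *
        poch (η + ξ + 1) (s / 2) /
        ((Nat.factorial (s / 2) : ℝ) * poch (η + 1/2) (s / 2) *
          poch (((N : ℝ) + 3) / 2 + η + ξ) (s / 2))
    else
      (-1 : ℝ) ^ (s / 2) * poch ((1 - (N : ℝ)) / 2) (s / 2) * poch (ξ + 1/2) (s / 2 + 1) *
        poch (η + ξ + 1) (s / 2) /
        ((Nat.factorial (s / 2) : ℝ) * poch (η + 1/2) (s / 2 + 1) *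
          poch (((N : ℝ) + 3) / 2 + η + ξ) (s / 2))

/-- Normalizations `ν_n(η, ξ, N)` for the dual −1 Hahn polynomials. -/
def nuDual (η ξ : ℝ) (N : ℕ) (n : ℕ) : ℝ :=
  if N % 2 = 0 then
    if n % 2 = 0 then
      (16 : ℝ) ^ n * (Nat.factorial (n / 2) : ℝ) * poch (-(N : ℝ) / 2) (n / 2) *
        poch (ξ + 1/2) (n / 2) * poch ((-(N : ℝ) - 2 * η + 1) / 2) (n / 2) *
        (poch (-(N : ℝ) - η - ξ) (N / 2) / poch ((-(N : ℝ) - 2 * ξ + 1) / 2) (N / 2))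
    else
      -(16 : ℝ) ^ n * (Nat.factorial (n / 2) : ℝ) * poch (-(N : ℝ) / 2) (n / 2 + 1) *
        poch (ξ + 1/2) (n / 2 + 1) * poch ((-(N : ℝ) - 2 * η + 1) / 2) (n / 2) *
        (poch (-(N : ℝ) - η - ξ) (N / 2) / poch ((-(N : ℝ) - 2 * ξ + 1) / 2) (N / 2))
  else
    if n % 2 = 0 then
      (16 : ℝ) ^ n * (Nat.factorial (n / 2) : ℝ) * poch ((1 - (N : ℝ)) / 2) (n / 2) *
        poch (ξ + 1/2) (n / 2) * poch (-(N : ℝ) / 2 - η) (n / 2) *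
        (poch (η + ξ + 1) ((N + 1) / 2) / poch (η + 1/2) ((N + 1) / 2))
    else
      -(16 : ℝ) ^ n * (Nat.factorial (n / 2) : ℝ) * poch ((1 - (N : ℝ)) / 2) (n / 2) *
        poch (ξ + 1/2) (n / 2 + 1) * poch (-(N : ℝ) / 2 - η) (n / 2 + 1) *
        (poch (η + ξ + 1) ((N + 1) / 2) / poch (η + 1/2) ((N + 1) / 2))

/-- The points `z_s = (-1)^{s+N+1} (2s + 2η + 2ξ + 1)`. -/
def zgrid (η ξ : ℝ) (N : ℕ) (s : ℕ) : ℝ :=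
  (-1 : ℝ) ^ (s + N + 1) * (2 * s + 2 * η + 2 * ξ + 1)

/-- The reversed weights `ρ_s(η, ξ, N)`. -/
def rhoDual (η ξ : ℝ) (N : ℕ) (s : ℕ) : ℝ :=
  if N % 2 = 0 then varpi η ξ N (N - s) else varpi η ξ N s

/-- The quantity `ν_0(η, ξ, N)`. -/
def nu0 (η ξ : ℝ) (N : ℕ) : ℝ :=
  if N % 2 = 0 then poch (-(N : ℝ) - η - ξ) (N / 2) / poch ((-(N : ℝ) - 2 * ξ + 1) / 2) (N / 2)
  else poch (η + ξ + 1) ((N + 1) / 2) / poch (η + 1/2) ((N + 1) / 2)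

/-- Bannai–Ito recurrence coefficient `A_n`. -/
def BIA (ρ1 ρ2 r1 r2 : ℝ) (n : ℕ) : ℝ :=
  if n % 2 = 0 then
    ((n : ℝ) + 2 * ρ1 - 2 * r1 + 1) * ((n : ℝ) + 2 * ρ1 - 2 * r2 + 1) /
      (4 * ((n : ℝ) + (ρ1 + ρ2 - r1 - r2) + 1))
  else
    ((n : ℝ) + 2 * (ρ1 + ρ2 - r1 - r2) + 1) * ((n : ℝ) + 2 * ρ1 + 2 * ρ2 + 1) /
      (4 * ((n : ℝ) + (ρ1 + ρ2 - r1 - r2) + 1))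

/-- Bannai–Ito recurrence coefficient `C_n`. -/
def BIC (ρ1 ρ2 r1 r2 : ℝ) (n : ℕ) : ℝ :=
  if n % 2 = 0 then
    -((n : ℝ) * ((n : ℝ) - 2 * r1 - 2 * r2)) / (4 * ((n : ℝ) + (ρ1 + ρ2 - r1 - r2)))
  else
    -(((n : ℝ) + 2 * ρ2 - 2 * r2) * ((n : ℝ) + 2 * ρ2 - 2 * r1)) /
      (4 * ((n : ℝ) + (ρ1 + ρ2 - r1 - r2)))

/-- Monic Bannai–Ito polynomials, defined by the three-term recurrence. -/
def BI (ρ1 ρ2 r1 r2 : ℝ) : ℕ → ℝ → ℝ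
  | 0 => fun _ => 1
  | 1 => fun x => x - (ρ1 - BIA ρ1 ρ2 r1 r2 0 - BIC ρ1 ρ2 r1 r2 0)
  | (n + 2) => fun x =>
      (x - (ρ1 - BIA ρ1 ρ2 r1 r2 (n + 1) - BIC ρ1 ρ2 r1 r2 (n + 1))) * BI ρ1 ρ2 r1 r2 (n + 1) x
      - BIA ρ1 ρ2 r1 r2 n * BIC ρ1 ρ2 r1 r2 (n + 1) * BI ρ1 ρ2 r1 r2 n x

/-- Bannai–Ito normalization `η_n`. -/
def BIeta (ρ1 ρ2 r1 r2 : ℝ) (n : ℕ) : ℝ :=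
  (-1 : ℝ) ^ n * poch (ρ1 - r1 + 1/2) (n / 2 + n % 2) * poch (ρ2 - r1 + 1/2) (n / 2 + n % 2) *
    poch (1 - r1 - r2) (n / 2) /
    poch (((n / 2 : ℕ) : ℝ) + (ρ1 + ρ2 - r1 - r2) + 1) (n / 2 + n % 2)

/-- Bannai–Ito grid points `x_k`. -/
def BIx (ρ1 : ℝ) (k : ℕ) : ℝ := (-1 : ℝ) ^ k * ((k : ℝ) / 2 + ρ1 + 1/4) - 1/4

/-- Bannai–Ito weights `w_k`. -/
def BIw (ρ1 ρ2 r1 r2 : ℝ) (k : ℕ) : ℝ :=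
  ((-1 : ℝ) ^ k / (Nat.factorial (k / 2) : ℝ)) *
    (poch (ρ1 - r1 + 1/2) (k / 2 + k % 2) * poch (ρ1 - r2 + 1/2) (k / 2 + k % 2) *
      poch (ρ1 + ρ2 + 1) (k / 2) * poch (2 * ρ1 + 1) (k / 2)) /
    (poch (ρ1 + r1 + 1/2) (k / 2 + k % 2) * poch (ρ1 + r2 + 1/2) (k / 2 + k % 2) *
      poch (ρ1 - ρ2 + 1) (k / 2))

/-- Bannai–Ito normalization `h_n` for even truncation parameter `N = 2 Ne`. -/
def BIhEven (ρ1 ρ2 r1 r2 : ℝ) (Ne : ℕ) (n : ℕ) : ℝ :=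
  (Nat.factorial (n / 2) : ℝ) * (Nat.factorial Ne : ℝ) * poch (1 + 2 * ρ1) Ne *
    poch (1 + ρ1 + ρ2) (n / 2) *
    poch (1 + ((n / 2 : ℕ) : ℝ) + (ρ1 + ρ2 - r1 - r2)) (Ne - n / 2) *
    poch (1/2 + ρ1 - r1) (n / 2 + n % 2) * poch (1/2 + ρ2 - r1) (n / 2 + n % 2) /
  ((Nat.factorial (Ne - n / 2 - n % 2) : ℝ) * poch (1/2 + ρ1 + r1) (Ne - n / 2) *
    poch (1/2 + ((n / 2 : ℕ) : ℝ) + ((n % 2 : ℕ) : ℝ) + ρ2 - r2) (Ne - n / 2 - n % 2) *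
    (poch (1 + (n : ℝ) + (ρ1 + ρ2 - r1 - r2)) (n / 2 + n % 2)) ^ 2)

/-- Bannai–Ito normalization `h_n` for odd truncation parameter `N = 2 Ne + 1`. -/
def BIhOdd (ρ1 ρ2 r1 r2 : ℝ) (Ne : ℕ) (n : ℕ) : ℝ :=
  (Nat.factorial (n / 2) : ℝ) * (Nat.factorial Ne : ℝ) * poch (1 + 2 * ρ1) (Ne + 1) *
    poch (1 - r1 - r2) (n / 2) *
    poch (1 + ((n / 2 : ℕ) : ℝ) + (ρ1 + ρ2 - r1 - r2)) (Ne + 1 - n / 2) *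
    poch (1/2 + ρ1 - r1) (n / 2 + n % 2) * poch (1/2 + ρ1 - r2) (n / 2 + n % 2) /
  ((Nat.factorial (Ne - n / 2) : ℝ) * poch (1/2 + ρ1 + r1) (Ne + 1 - n / 2 - n % 2) *
    poch (1/2 + ((n / 2 : ℕ) : ℝ) + ((n % 2 : ℕ) : ℝ) + ρ2 - r2) (Ne + 1 - n / 2 - n % 2) *
    (poch (1 + (n : ℝ) + (ρ1 + ρ2 - r1 - r2)) (n / 2 + n % 2)) ^ 2)

/-- Bannai–Ito normalization `h_n` with truncation parameter `N`. -/
def BIh (ρ1 ρ2 r1 r2 : ℝ) (N : ℕ) (n : ℕ) : ℝ :=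
  if N % 2 = 0 then BIhEven ρ1 ρ2 r1 r2 (N / 2) n else BIhOdd ρ1 ρ2 r1 r2 (N / 2) n

/-- Phase `φ(n1, n2, j)` of the Clebsch–Gordan coefficients. -/
def cgPhi (n1 n2 j : ℕ) : ℕ := n1 * (n1 - 1) / 2 + j * (j + 1) / 2 + n1 * (n1 + n2 + 1)

/-- Clebsch–Gordan coefficients `C^{N,j}_{n1,n2}` of `osp(1|2)`. -/
def CG (μ1 μ2 ε2 : ℝ) (n1 n2 j : ℕ) : ℝ :=
  (-1 : ℝ) ^ (cgPhi n1 n2 j) * (ε2 / 2) ^ n1 *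
    Real.sqrt (mufact μ2 n2 * rhoDual μ2 μ1 (n1 + n2) j /
      (mufact μ1 n1 * mufact μ2 (n1 + n2) * nu0 μ2 μ1 (n1 + n2))) *
    Rdual μ2 μ1 (n1 + n2) n1 (zgrid μ2 μ1 (n1 + n2) j)

/-- Phase `φ` of the Racah coefficients. -/
def racahPhi (j12 j23 j123 : ℕ) : ℕ :=
  j123 * ((j12 - 1) * j12 / 2) + (j123 + 1) * (j23 + (j12 + 1) * j12 / 2)

/-- Racah coefficients of `osp(1|2)` in terms of Bannai–Ito polynomials. -/
def racah (μ1 μ2 μ3 ε3 : ℝ) (j12 j23 j123 : ℕ) : ℝ :=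
  (-1 : ℝ) ^ (racahPhi j12 j23 j123) * ε3 ^ j12 *
    Real.sqrt (BIw ((μ2 + μ3) / 2) ((μ1 + (-1 : ℝ) ^ j123 * (μ1 + μ2 + μ3 + 1 + j123)) / 2)
        ((μ3 - μ2) / 2) (((-1 : ℝ) ^ j123 * (μ1 + μ2 + μ3 + 1 + j123) - μ1) / 2) j23 /
      BIh ((μ2 + μ3) / 2) ((μ1 + (-1 : ℝ) ^ j123 * (μ1 + μ2 + μ3 + 1 + j123)) / 2)
        ((μ3 - μ2) / 2) (((-1 : ℝ) ^ j123 * (μ1 + μ2 + μ3 + 1 + j123) - μ1) / 2) j123 j12) *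
    BI ((μ2 + μ3) / 2) ((μ1 + (-1 : ℝ) ^ j123 * (μ1 + μ2 + μ3 + 1 + j123)) / 2)
      ((μ3 - μ2) / 2) (((-1 : ℝ) ^ j123 * (μ1 + μ2 + μ3 + 1 + j123) - μ1) / 2) j12
      (BIx ((μ2 + μ3) / 2) j23)

/-- The hypergeometric function `₀F₁(; b; x)`. -/
def hyp0F1 (b x : ℝ) : ℝ := ∑' k : ℕ, x ^ k / (poch b k * (Nat.factorial k : ℝ))

/-- Truncated Gauss hypergeometric sum `₂F₁` (used for terminating series). -/
def hyp2F1fin (m : ℕ) (a1 a2 b x : ℝ) : ℝ :=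
  ∑ k ∈ Finset.range m, poch a1 k * poch a2 k / (poch b k * (Nat.factorial k : ℝ)) * x ^ k

/-- The function `f_e(j)` appearing in the bilinear generating function. -/
def fe (μ1 μ2 ε2 z1 z2 : ℝ) (j : ℕ) : ℝ :=
  (-1 : ℝ) ^ (j / 2 + j % 2) * (z2 ^ j / Real.sqrt (mufact μ2 j)) *
    Real.sqrt (poch (1/2 + μ1) (j / 2 + j % 2) /
      poch (((j / 2 : ℕ) : ℝ) + ((j % 2 : ℕ) : ℝ) + 1 + μ1 + μ2) (j / 2 + j % 2)) *
    (hyp2F1fin (j + 1) (-((j / 2 : ℕ) : ℝ)) (1/2 - ((j / 2 : ℕ) : ℝ) - ((j % 2 : ℕ) : ℝ) - μ2)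
        (1/2 + μ1) (-(z1 / z2) ^ 2)
      + ((-1 : ℝ) ^ (j % 2) * z1 * ((j : ℝ) + 2 * μ2 * ((j % 2 : ℕ) : ℝ)) /
          (z2 * ε2 * (1 + 2 * μ1))) *
        hyp2F1fin (j + 1) (1 - ((j / 2 : ℕ) : ℝ) - ((j % 2 : ℕ) : ℝ)) (1/2 - ((j / 2 : ℕ) : ℝ) - μ2)
          (3/2 + μ1) (-(z1 / z2) ^ 2))

/-- The function `f_o(j)` appearing in the bilinear generating function. -/
def fo (μ1 μ2 ε2 z1 z2 : ℝ) (j : ℕ) : ℝ :=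
  (-1 : ℝ) ^ (j / 2 + j % 2) * (Real.sqrt ((z1 / z2) ^ 2 + 1))⁻¹ *
    (z2 ^ j / Real.sqrt (mufact μ2 j)) *
    Real.sqrt (poch (1/2 + μ1) (j / 2 + j % 2) /
      poch (((j / 2 : ℕ) : ℝ) + ((j % 2 : ℕ) : ℝ) + 1 + μ1 + μ2) (j / 2 + j % 2)) *
    (hyp2F1fin (j + 1) (-((j / 2 : ℕ) : ℝ) - ((j % 2 : ℕ) : ℝ)) (-1/2 - ((j / 2 : ℕ) : ℝ) - μ2)
        (1/2 + μ1) (-(z1 / z2) ^ 2)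
      + ((-1 : ℝ) ^ (j % 2) * z1 * ((j : ℝ) + 1 + 2 * μ1 + 2 * μ2 * ((j % 2 : ℕ) : ℝ)) /
          (z2 * ε2 * (1 + 2 * μ1))) *
        hyp2F1fin (j + 1) (-((j / 2 : ℕ) : ℝ)) (1/2 - ((j / 2 : ℕ) : ℝ) - ((j % 2 : ℕ) : ℝ) - μ2)
          (3/2 + μ1) (-(z1 / z2) ^ 2))

/-- Dunkl realization: `J₊`. -/
def Jp (f : ℝ → ℝ) : ℝ → ℝ := fun z => z * f z

/-- Dunkl realization: `J₋` (the Dunkl derivative). -/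
def Jm (μ : ℝ) (f : ℝ → ℝ) : ℝ → ℝ := fun z => deriv f z + (μ / z) * (f z - f (-z))

/-- Dunkl realization: `J₀`. -/
def J0op (μ : ℝ) (f : ℝ → ℝ) : ℝ → ℝ := fun z => z * deriv f z + (μ + 1/2) * f z

/-- Reflection operator `R`. -/
def Rop (f : ℝ → ℝ) : ℝ → ℝ := fun z => f (-z)

/-! With `y = (λ² - γ²)/2`, `P_{2m}` is a multiple of `L_m^{(μ-1/2)}(y)` and `P_{2m+1}` one of
`(λ - γ) L_m^{(μ+1/2)}(y)`. At an even index the recurrence is the contiguous relation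
`L_{m+1}^{(α)} = L_{m+1}^{(α+1)} - L_m^{(α+1)}`; at an odd index, since `(λ + γ)(λ - γ) = 2y`, it is
`y L_m^{(α+1)} = (m+α+1) L_m^{(α)} - (m+1) L_{m+1}^{(α)}`. Both relations hold coefficientwise, and the
normalising square roots match because `Γ(s + 1) = s Γ(s)`. -/

section Pochhammer

lemma poch_zero (a : ℝ) : poch a 0 = 1 := Finset.prod_range_zero _

lemma poch_succ (a : ℝ) (k : ℕ) : poch a (k + 1) = poch a k * (a + k) :=
  Finset.prod_range_succ _ _

lemma poch_succ' (a : ℝ) (k : ℕ) : poch a (k + 1) = a * poch (a + 1) k := by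
  rw [poch, Finset.prod_range_succ', mul_comm, Nat.cast_zero, add_zero, poch]
  congr 1
  exact Finset.prod_congr rfl fun i _ => by push_cast; ring

lemma poch_pos {a : ℝ} (ha : 0 < a) (k : ℕ) : 0 < poch a k :=
  Finset.prod_pos fun i _ => by positivity

lemma poch_neg_natCast_of_lt {n k : ℕ} (h : n < k) : poch (-n) k = 0 :=
  Finset.prod_eq_zero (Finset.mem_range.2 h) (by ring)

end Pochhammer

section Laguerre

open Nat

variable {α : ℝ}

def laguerreCoeff (α : ℝ) (n k : ℕ) : ℝ :=
  poch (α + 1) n / n ! * (poch (-n) k / (poch (α + 1) k * k !))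

lemma laguerreCoeff_of_lt {n k : ℕ} (h : n < k) : laguerreCoeff α n k = 0 := by
  rw [laguerreCoeff, poch_neg_natCast_of_lt h, zero_div, mul_zero]

lemma laguerre_eq_sum_range {n N : ℕ} (hN : n + 1 ≤ N) (x : ℝ) :
    laguerre α n x = ∑ k ∈ Finset.range N, laguerreCoeff α n k * x ^ k := by
  calc laguerre α n x = ∑ k ∈ Finset.range (n + 1), laguerreCoeff α n k * x ^ k := by
        simp only [laguerre, Finset.mul_sum, laguerreCoeff, mul_assoc]
    _ = _ := Finset.sum_subset (Finset.range_subset_range.2 hN) fun k _ hk => by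
        rw [laguerreCoeff_of_lt (by simpa using hk), zero_mul]

lemma laguerreCoeff_succ (hα : -1 < α) (m k : ℕ) :
    laguerreCoeff α (m + 1) k = laguerreCoeff (α + 1) (m + 1) k - laguerreCoeff (α + 1) m k := by
  have hα₁ : 0 < α + 1 := by linarith
  have hk : α + 1 + k ≠ 0 := (add_pos_of_pos_of_nonneg hα₁ k.cast_nonneg).ne'
  have hm : (m : ℝ) + 1 ≠ 0 := by positivity
  have hpoch_ne := (poch_pos (a := α + 1 + 1) (by linarith) k).ne'
  have hpoch_k : poch (α + 1) k = (α + 1) * poch (α + 1 + 1) k / (α + 1 + k) := by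
    rw [eq_div_iff hk, ← poch_succ, poch_succ']
  have hpoch_neg : poch (-m) k = poch (-(m + 1)) k * (m + 1 - k) / (m + 1) := by
    rw [eq_div_iff hm]
    have := poch_succ' (-(m + 1 : ℝ)) k
    rw [poch_succ, show -((m : ℝ) + 1) + 1 = -m by ring] at this
    linear_combination this
  simp only [laguerreCoeff, poch_succ' (α + 1) m, poch_succ (α + 1 + 1) m, Nat.factorial_succ,
    Nat.cast_mul, Nat.cast_succ, hpoch_k, hpoch_neg]
  field_simp
  ring

lemma laguerreCoeff_add_one (hα : -1 < α) (m k : ℕ) :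
    laguerreCoeff (α + 1) m k =
      (m + α + 1) * laguerreCoeff α m (k + 1) - (m + 1) * laguerreCoeff α (m + 1) (k + 1) := by
  have hα₁ : 0 < α + 1 := by linarith
  have hpoch_ne := (poch_pos (a := α + 1 + 1) (by linarith) k).ne'
  have hpoch_m : poch (α + 1 + 1) m = poch (α + 1) m * (α + 1 + m) / (α + 1) := by
    rw [eq_div_iff hα₁.ne', ← poch_succ, poch_succ', mul_comm]
  have hpoch_neg : poch (-(m + 1 : ℝ)) (k + 1) = -(m + 1) * poch (-m) k := by
    rw [poch_succ', show -((m : ℝ) + 1) + 1 = -m by ring]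
  simp only [laguerreCoeff, hpoch_m, poch_succ' (α + 1) k, poch_succ (-(m : ℝ)) k, hpoch_neg,
    poch_succ (α + 1) m, Nat.factorial_succ, Nat.cast_mul, Nat.cast_succ]
  field_simp
  ring

lemma succ_mul_laguerreCoeff_succ_zero (α : ℝ) (m : ℕ) :
    (m + 1) * laguerreCoeff α (m + 1) 0 = (m + α + 1) * laguerreCoeff α m 0 := by
  simp only [laguerreCoeff, poch_zero, poch_succ (α + 1) m, Nat.factorial_succ, Nat.cast_mul,
    Nat.cast_succ]
  field_simp
  ring

theorem laguerre_succ_eq_sub (hα : -1 < α) (m : ℕ) (x : ℝ) :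
    laguerre α (m + 1) x = laguerre (α + 1) (m + 1) x - laguerre (α + 1) m x := by
  rw [laguerre_eq_sum_range le_rfl, laguerre_eq_sum_range le_rfl,
    laguerre_eq_sum_range (by omega : m + 1 ≤ m + 1 + 1), ← Finset.sum_sub_distrib]
  exact Finset.sum_congr rfl fun k _ => by rw [laguerreCoeff_succ hα, sub_mul]

theorem mul_laguerre_add_one (hα : -1 < α) (m : ℕ) (x : ℝ) :
    x * laguerre (α + 1) m x =
      (m + α + 1) * laguerre α m x - (m + 1) * laguerre α (m + 1) x := by
  rw [laguerre_eq_sum_range le_rfl, laguerre_eq_sum_range (by omega : m + 1 ≤ m + 2),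
    laguerre_eq_sum_range le_rfl, Finset.mul_sum, Finset.mul_sum, Finset.mul_sum,
    ← Finset.sum_sub_distrib, Finset.sum_range_succ' _ (m + 1)]
  have hconst := succ_mul_laguerreCoeff_succ_zero α m
  rw [pow_zero, mul_one, mul_one, hconst, sub_self, add_zero]
  exact Finset.sum_congr rfl fun k _ => by rw [laguerreCoeff_add_one hα]; ring

theorem laguerre_zero_left (α x : ℝ) : laguerre α 0 x = 1 := by
  simp [laguerre, poch_zero]

end Laguerre

section Chihara

open Nat

variable {μ : ℝ}

lemma Gamma_add_three_halves {s : ℝ} (hs : s + 1/2 ≠ 0) :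
    Real.Gamma (s + 3/2) = (s + 1/2) * Real.Gamma (s + 1/2) := by
  rw [← Real.Gamma_add_one hs]
  ring_nf

lemma munum_two_mul (μ : ℝ) (m : ℕ) : munum μ (2 * m) = 2 * m := by
  simp [munum, pow_mul]

lemma munum_two_mul_add_one (μ : ℝ) (m : ℕ) : munum μ (2 * m + 1) = 2 * (m + μ + 1/2) := by
  rw [munum, pow_succ, pow_mul, neg_one_sq, one_pow]
  push_cast
  ring

def chiharaNormEven (μ : ℝ) (m : ℕ) : ℝ :=
  √(m ! * Real.Gamma (μ + 1/2) / Real.Gamma (m + μ + 1/2))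

def chiharaNormOdd (μ : ℝ) (m : ℕ) : ℝ :=
  √(m ! * Real.Gamma (μ + 3/2) / Real.Gamma (m + μ + 3/2)) / √(2 * μ + 1)

lemma P_two_mul (μ γ x : ℝ) (m : ℕ) :
    P μ γ (2 * m) x =
      (-1) ^ m * chiharaNormEven μ m * laguerre (μ - 1/2) m ((x ^ 2 - γ ^ 2) / 2) := by
  simp [P, chiharaNormEven]

lemma P_two_mul_add_one (μ γ x : ℝ) (m : ℕ) :
    P μ γ (2 * m + 1) x =
      (-1) ^ m * chiharaNormOdd μ m * (x - γ) * laguerre (μ + 1/2) m ((x ^ 2 - γ ^ 2) / 2) := by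
  have hhalf : (2 * m + 1) / 2 = m := by omega
  rw [P, if_neg (by omega), hhalf, chiharaNormOdd]
  ring

lemma sqrt_munum_two_mul_add_one_mul_chiharaNormOdd (hμ : 0 < μ + 1/2) (m : ℕ) :
    √(munum μ (2 * m + 1)) * chiharaNormOdd μ m = chiharaNormEven μ m := by
  have hm : (0 : ℝ) < m + μ + 1/2 := by linarith [Nat.cast_nonneg (α := ℝ) m]
  have := (Real.Gamma_pos_of_pos hμ).ne'
  have := (Real.Gamma_pos_of_pos hm).ne'
  rw [chiharaNormOdd, chiharaNormEven, ← Real.sqrt_div' _ (by linarith), ← Real.sqrt_mul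
    (by rw [munum_two_mul_add_one]; linarith), munum_two_mul_add_one,
    Gamma_add_three_halves hμ.ne', Gamma_add_three_halves (s := m + μ) hm.ne',
    show 2 * μ + 1 = 2 * (μ + 1/2) by ring]
  congr 1
  -- otherwise `field_simp` also rewrites inside the arguments of `Gamma`
  generalize μ + 1/2 = a at *
  generalize (m : ℝ) + μ + 1/2 = b at *
  field_simp

lemma sqrt_munum_two_mul_mul_chiharaNormOdd (hμ : 0 < μ + 1/2) (m : ℕ) :
    √(munum μ (2 * (m + 1))) * chiharaNormOdd μ m = chiharaNormEven μ (m + 1) := by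
  have hm : (0 : ℝ) < m + μ + 1/2 := by linarith [Nat.cast_nonneg (α := ℝ) m]
  have := (Real.Gamma_pos_of_pos hμ).ne'
  have := (Real.Gamma_pos_of_pos hm).ne'
  rw [chiharaNormOdd, chiharaNormEven, ← Real.sqrt_div' _ (by linarith), ← Real.sqrt_mul
    (by rw [munum_two_mul]; positivity), munum_two_mul, Nat.factorial_succ, Nat.cast_mul,
    Nat.cast_succ, show (m : ℝ) + 1 + μ + 1/2 = m + μ + 3/2 by ring,
    Gamma_add_three_halves hμ.ne', Gamma_add_three_halves (s := m + μ) hm.ne',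
    show 2 * μ + 1 = 2 * (μ + 1/2) by ring]
  congr 1
  generalize μ + 1/2 = a at *
  generalize (m : ℝ) + μ + 1/2 = b at *
  field_simp

lemma sub_mul_P_zero (hμ : 0 < μ + 1/2) (γ x : ℝ) :
    (x - γ) * P μ γ 0 x = √(munum μ 1) * P μ γ 1 x := by
  have hodd := sqrt_munum_two_mul_add_one_mul_chiharaNormOdd hμ 0
  have hP₀ := P_two_mul μ γ x 0
  have hP₁ := P_two_mul_add_one μ γ x 0
  simp only [mul_zero, zero_add, pow_zero, one_mul, laguerre_zero_left, mul_one] at hodd hP₀ hP₁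
  rw [hP₀, hP₁]
  linear_combination -(x - γ) * hodd

lemma sub_mul_P_two_mul_succ (hμ : 0 < μ + 1/2) (γ x : ℝ) (m : ℕ) :
    (x - γ) * P μ γ (2 * (m + 1)) x =
      √(munum μ (2 * (m + 1) + 1)) * P μ γ (2 * (m + 1) + 1) x
        + √(munum μ (2 * (m + 1))) * P μ γ (2 * m + 1) x := by
  have hodd := sqrt_munum_two_mul_add_one_mul_chiharaNormOdd hμ (m + 1)
  have heven := sqrt_munum_two_mul_mul_chiharaNormOdd hμ m
  rw [P_two_mul, P_two_mul_add_one, P_two_mul_add_one, laguerre_succ_eq_sub (by linarith),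
    show μ - 1/2 + 1 = μ + 1/2 by ring]
  set L₁ := laguerre (μ + 1/2) (m + 1) ((x ^ 2 - γ ^ 2) / 2)
  set L₀ := laguerre (μ + 1/2) m ((x ^ 2 - γ ^ 2) / 2)
  linear_combination (-1) ^ m * (x - γ) * (L₁ * hodd - L₀ * heven)

lemma add_mul_P_two_mul_add_one (hμ : 0 < μ + 1/2) (γ x : ℝ) (m : ℕ) :
    (x + γ) * P μ γ (2 * m + 1) x =
      √(munum μ (2 * (m + 1))) * P μ γ (2 * (m + 1)) x
        + √(munum μ (2 * m + 1)) * P μ γ (2 * m) x := by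
  have hodd := sqrt_munum_two_mul_add_one_mul_chiharaNormOdd hμ m
  have heven := sqrt_munum_two_mul_mul_chiharaNormOdd hμ m
  have hodd_sq : √(munum μ (2 * m + 1)) ^ 2 = 2 * (m + μ + 1/2) := by
    rw [munum_two_mul_add_one, Real.sq_sqrt (by linarith [Nat.cast_nonneg (α := ℝ) m])]
  have heven_sq : √(munum μ (2 * (m + 1))) ^ 2 = 2 * (m + 1) := by
    rw [munum_two_mul, Real.sq_sqrt (by positivity)]
    push_cast
    ring
  have hlag := mul_laguerre_add_one (α := μ - 1/2) (by linarith) m ((x ^ 2 - γ ^ 2) / 2)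
  rw [show μ - 1/2 + 1 = μ + 1/2 by ring, show (m : ℝ) + (μ - 1/2) + 1 = m + μ + 1/2 by ring]
    at hlag
  rw [P_two_mul_add_one, P_two_mul, P_two_mul]
  set L₁ := laguerre (μ - 1/2) (m + 1) ((x ^ 2 - γ ^ 2) / 2)
  set L₀ := laguerre (μ - 1/2) m ((x ^ 2 - γ ^ 2) / 2)
  set N := chiharaNormOdd μ m
  linear_combination (-1) ^ m * (2 * N * hlag + L₀ * (√(munum μ (2 * m + 1)) * hodd - N * hodd_sq)
    - L₁ * (√(munum μ (2 * (m + 1))) * heven - N * heven_sq))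

end Chihara

/-- three-term recurrence for the Specialized Chihara polynomials. -/
theorem chihara_recurrence (μ γ lam : ℝ) (hμ : 0 < μ) (n : ℕ) :
    lam * P μ γ n lam =
      Real.sqrt (munum μ (n + 1)) * P μ γ (n + 1) lam
      + γ * (-1 : ℝ) ^ n * P μ γ n lam
      + Real.sqrt (munum μ n) * (if n = 0 then 0 else P μ γ (n - 1) lam) := by
  have hμ' : 0 < μ + 1/2 := by linarith
  obtain ⟨m, rfl | rfl⟩ := n.even_or_odd'
  · rcases m with _ | m
    · simp only [mul_zero, zero_add, if_pos, pow_zero, add_zero]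
      linear_combination sub_mul_P_zero hμ' γ lam
    · rw [if_neg (by omega), show 2 * (m + 1) - 1 = 2 * m + 1 by omega, pow_mul, neg_one_sq,
        one_pow]
      linear_combination sub_mul_P_two_mul_succ hμ' γ lam m
  · rw [if_neg (by omega), show 2 * m + 1 - 1 = 2 * m by omega,
      show 2 * m + 1 + 1 = 2 * (m + 1) by omega, pow_succ, pow_mul, neg_one_sq, one_pow]
    linear_combination add_mul_P_two_mul_add_one hμ' γ lam m

end MinusOne
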